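/- Let Δ be an irreducible root system with Coxeter number h. For every simple root α, one has q_α ≤ h, and moreover q_α = h if and only if the fundamental weight ϖ_α is minuscule (i.e., (ϖ_α, γ^∨) ≤ 1 for all γ ∈ Δ⁺). Furthermore q_α ≥ rk(Δ) + 1 for every α. -/

import Mathlib

open scoped RealInnerProductSpace
open scoped Classical

/-- An (irreducible, reduced, crystallographic) root system in a real inner product
space `V`, together with a choice of base (simple roots), coordinate functions with
respect to the base, and fundamental weights. -/
structure RootSystemData (V : Type*) [NormedAddCommGroup V] [InnerProductSpace ℝ V] where
  Δ : Finset V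
  base : Finset V
  base_sub : base ⊆ Δ
  root_ne_zero : ∀ γ ∈ Δ, γ ≠ 0
  span_eq_top : Submodule.span ℝ (Δ : Set V) = ⊤
  reflect_mem : ∀ γ ∈ Δ, ∀ δ ∈ Δ, δ - (2 * ⟪δ, γ⟫ / ⟪γ, γ⟫) • γ ∈ Δ
  crystallographic : ∀ γ ∈ Δ, ∀ δ ∈ Δ, ∃ k : ℤ, 2 * ⟪δ, γ⟫ / ⟪γ, γ⟫ = (k : ℝ)
  reduced : ∀ γ ∈ Δ, (2 : ℝ) • γ ∉ Δ
  coord : V → V → ℝ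
  coord_add : ∀ α x y, coord (x + y) α = coord x α + coord y α
  coord_smul : ∀ α (c : ℝ) (x : V), coord (c • x) α = c * coord x α
  coord_base : ∀ α ∈ base, ∀ β ∈ base, coord β α = if β = α then 1 else 0
  root_decomp : ∀ γ ∈ Δ, γ = ∑ α ∈ base, coord γ α • α
  pos_or_neg : ∀ γ ∈ Δ, (∀ α ∈ base, 0 ≤ coord γ α) ∨ (∀ α ∈ base, coord γ α ≤ 0)
  coord_int : ∀ γ ∈ Δ, ∀ α ∈ base, ∃ k : ℤ, coord γ α = (k : ℝ)
  irreducible : ∀ S ⊆ Δ, S.Nonempty →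
    (∀ γ ∈ S, ∀ δ ∈ Δ, δ ∉ S → ⟪γ, δ⟫ = 0) → S = Δ
  fw : V → V
  fw_spec : ∀ α ∈ base, ∀ β ∈ base, ⟪fw α, β⟫ = if β = α then ⟪α, α⟫ / 2 else 0

namespace RootSystemData

variable {V : Type*} [NormedAddCommGroup V] [InnerProductSpace ℝ V]

/-- The set of positive roots (nonnegative coordinates w.r.t. the base). -/
noncomputable def posRoots (R : RootSystemData V) : Finset V :=
  R.Δ.filter fun γ => ∀ α ∈ R.base, 0 ≤ R.coord γ α

/-- The height of a root: the sum of its coordinates in the base. -/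
noncomputable def ht (R : RootSystemData V) (γ : V) : ℝ :=
  ∑ α ∈ R.base, R.coord γ α

/-- The height of the coroot `γ^∨` in the dual root system. -/
noncomputable def dualHt (R : RootSystemData V) (γ : V) : ℝ :=
  ∑ α ∈ R.base, R.coord γ α * ⟪α, α⟫ / ⟪γ, γ⟫

/-- `R_α`: the set of roots having positive inner product with the fundamental
weight `ϖ_α`. -/
noncomputable def Rset (R : RootSystemData V) (α : V) : Finset V :=
  R.Δ.filter fun γ => 0 < ⟪γ, R.fw α⟫

/-- `Δ_α(i)`: the set of roots whose coefficient of `α` equals `i`. -/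
noncomputable def level (R : RootSystemData V) (α : V) (i : ℤ) : Finset V :=
  R.Δ.filter fun γ => R.coord γ α = (i : ℝ)

end RootSystemData

/-!
The operator `casimir x = ∑_{δ ∈ Δ} ⟨x, δ^∨⟩ δ` commutes with every reflection `s_γ`, so by
irreducibility it is a scalar `c`. Evaluating `⟪casimir θ, θ⟫` gives `c = 2h`, because
`⟨γ, θ^∨⟩ ∈ {0, 1}` for every positive root `γ ≠ θ`. Evaluating `⟪casimir ϖ, ϖ⟫` instead, and
using `∑_{δ > 0} ⟪δ, ϖ⟫ = q ⟪ϖ, ϖ⟫`, gives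
`(h - q) ⟪ϖ, ϖ⟫ = ∑_{δ > 0} (⟨ϖ, δ^∨⟩ - 1) ⟪δ, ϖ⟫`.
Every `⟨ϖ, δ^∨⟩` is a natural number, so each term is nonnegative, and it vanishes iff
`⟨ϖ, δ^∨⟩ ≤ 1`.

For the lower bound, pair `∑_{γ ∈ R_α} γ = q ϖ` with `α^∨` and use `⟨2ρ, α^∨⟩ = 2`. This gives
`q = 2 - ∑ ⟨γ, α^∨⟩`, summed over the positive roots with zero `α`-coefficient. Each such term is
`≤ 0`, and it is `≤ -1` unless `γ ⟂ α`. Since the Dynkin diagram is connected, the roots of the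
second kind span every simple root other than `α`, so there are at least `n - 1` of them.
-/

namespace RootSystemData

variable {V : Type*} [NormedAddCommGroup V] [InnerProductSpace ℝ V]

/-- `pairing x γ` is `⟨x, γ^∨⟩`. -/
noncomputable def pairing (x γ : V) : ℝ := 2 * ⟪x, γ⟫ / ⟪γ, γ⟫

lemma pairing_add_left (x y γ : V) : pairing (x + y) γ = pairing x γ + pairing y γ := by
  simp only [pairing, inner_add_left]; ring

lemma pairing_smul_left (c : ℝ) (x γ : V) : pairing (c • x) γ = c * pairing x γ := by
  simp only [pairing, real_inner_smul_left]; ring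

lemma pairing_neg_left (x γ : V) : pairing (-x) γ = -pairing x γ := by
  simp only [pairing, inner_neg_left]; ring

lemma pairing_neg_right (x γ : V) : pairing x (-γ) = -pairing x γ := by
  simp only [pairing, inner_neg_right, inner_neg_left, neg_neg]; ring

lemma pairing_self {γ : V} (hγ : γ ≠ 0) : pairing γ γ = 2 := by
  simp [pairing, hγ]

lemma inner_eq_pairing_mul {γ : V} (hγ : γ ≠ 0) (x : V) :
    ⟪x, γ⟫ = pairing x γ * (⟪γ, γ⟫ / 2) := by
  have : ⟪γ, γ⟫ ≠ 0 := by simpa using hγ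
  simp only [pairing]; field_simp

lemma pairing_eq_zero_iff {γ : V} (hγ : γ ≠ 0) {x : V} : pairing x γ = 0 ↔ ⟪x, γ⟫ = 0 := by
  simp [pairing, hγ]

lemma pairing_pos_iff {γ : V} (hγ : γ ≠ 0) {x : V} : 0 < pairing x γ ↔ 0 < ⟪x, γ⟫ := by
  rw [pairing, div_pos_iff_of_pos_right (real_inner_self_pos.2 hγ)]
  exact mul_pos_iff_of_pos_left two_pos

noncomputable def sref (γ : V) : V →ₗ[ℝ] V where
  toFun x := x - pairing x γ • γ
  map_add' x y := by rw [pairing_add_left, add_smul]; abel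
  map_smul' c x := by rw [pairing_smul_left, smul_sub, smul_smul]; rfl

lemma sref_apply (γ x : V) : sref γ x = x - pairing x γ • γ := rfl

lemma sref_self {γ : V} (hγ : γ ≠ 0) : sref γ γ = -γ := by
  rw [sref_apply, pairing_self hγ]; module

lemma pairing_sref_self {γ : V} (hγ : γ ≠ 0) (x : V) : pairing (sref γ x) γ = -pairing x γ := by
  rw [sref_apply, sub_eq_add_neg, pairing_add_left, pairing_neg_left, pairing_smul_left,
    pairing_self hγ]; ring

lemma sref_sref {γ : V} (hγ : γ ≠ 0) (x : V) : sref γ (sref γ x) = x := by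
  conv_lhs => rw [sref_apply, pairing_sref_self hγ, sref_apply]
  module

lemma inner_sref_sref {γ : V} (hγ : γ ≠ 0) (x y : V) : ⟪sref γ x, sref γ y⟫ = ⟪x, y⟫ := by
  have : ⟪γ, γ⟫ ≠ 0 := by simpa using hγ
  simp only [sref_apply, pairing, inner_sub_left, inner_sub_right, real_inner_smul_left,
    real_inner_smul_right, real_inner_comm γ y]
  field_simp
  ring

lemma pairing_sref_sref {γ : V} (hγ : γ ≠ 0) (x y : V) :
    pairing (sref γ x) (sref γ y) = pairing x y := by
  simp only [pairing, inner_sref_sref hγ]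

lemma pairing_sref_left_eq {γ : V} (hγ : γ ≠ 0) (x y : V) :
    pairing (sref γ x) y = pairing x (sref γ y) := by
  conv_lhs => rw [← sref_sref hγ y, pairing_sref_sref hγ]

lemma sref_eq_self_of_inner_eq_zero {γ x : V} (h : ⟪x, γ⟫ = 0) : sref γ x = x := by
  simp [sref_apply, pairing, h]

variable (R : RootSystemData V)

lemma coord_zero (β : V) : R.coord 0 β = 0 := by
  simpa using R.coord_smul β 0 0

lemma coord_neg (β x : V) : R.coord (-x) β = -R.coord x β := by
  simpa using R.coord_smul β (-1) x

lemma coord_sub (β x y : V) : R.coord (x - y) β = R.coord x β - R.coord y β := by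
  rw [sub_eq_add_neg, R.coord_add, R.coord_neg]; ring

lemma coord_sum {ι : Type*} (s : Finset ι) (f : ι → V) (β : V) :
    R.coord (∑ i ∈ s, f i) β = ∑ i ∈ s, R.coord (f i) β := by
  induction s using Finset.induction_on with
  | empty => simpa using R.coord_zero β
  | insert a s h ih => rw [Finset.sum_insert h, Finset.sum_insert h, R.coord_add, ih]

lemma coord_sref (γ x β : V) : R.coord (sref γ x) β = R.coord x β - pairing x γ * R.coord γ β := by
  rw [sref_apply, R.coord_sub, R.coord_smul]

lemma coord_simple {β δ : V} (hβ : β ∈ R.base) (hδ : δ ∈ R.base) :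
    R.coord β δ = if β = δ then 1 else 0 :=
  R.coord_base δ hδ β hβ

lemma ht_simple {β : V} (hβ : β ∈ R.base) : R.ht β = 1 := by
  rw [ht, Finset.sum_eq_single_of_mem β hβ fun δ hδ hne => by simp [R.coord_simple hβ hδ, hne.symm]]
  simp [R.coord_simple hβ hβ]

lemma ht_sref {β : V} (hβ : β ∈ R.base) (x : V) : R.ht (sref β x) = R.ht x - pairing x β := by
  simp only [ht, R.coord_sref, Finset.sum_sub_distrib, ← Finset.mul_sum]
  rw [show ∑ δ ∈ R.base, R.coord β δ = 1 from R.ht_simple hβ, mul_one]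

lemma inner_self_pos {γ : V} (hγ : γ ∈ R.Δ) : 0 < ⟪γ, γ⟫ :=
  real_inner_self_pos.2 (R.root_ne_zero γ hγ)

lemma sref_mem {γ δ : V} (hγ : γ ∈ R.Δ) (hδ : δ ∈ R.Δ) : sref γ δ ∈ R.Δ :=
  R.reflect_mem γ hγ δ hδ

lemma neg_mem {γ : V} (hγ : γ ∈ R.Δ) : -γ ∈ R.Δ := by
  simpa [sref_self (R.root_ne_zero γ hγ)] using R.sref_mem hγ hγ

lemma exists_pairing_eq_int {x γ : V} (hx : x ∈ R.Δ) (hγ : γ ∈ R.Δ) : ∃ k : ℤ, pairing x γ = k :=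
  R.crystallographic γ hγ x hx

lemma mem_posRoots {γ : V} : γ ∈ R.posRoots ↔ γ ∈ R.Δ ∧ ∀ β ∈ R.base, 0 ≤ R.coord γ β :=
  Finset.mem_filter

lemma posRoots_subset : R.posRoots ⊆ R.Δ := Finset.filter_subset _ _

lemma coord_nonneg {γ β : V} (hγ : γ ∈ R.posRoots) (hβ : β ∈ R.base) : 0 ≤ R.coord γ β :=
  (R.mem_posRoots.1 hγ).2 β hβ

lemma exists_coord_ne_zero {γ : V} (hγ : γ ∈ R.Δ) : ∃ β ∈ R.base, R.coord γ β ≠ 0 := by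
  by_contra! h
  apply R.root_ne_zero γ hγ
  rw [R.root_decomp γ hγ]
  exact Finset.sum_eq_zero fun β hβ => by rw [h β hβ, zero_smul]

lemma mem_posRoots_of_coord_pos {γ β : V} (hγ : γ ∈ R.Δ) (hβ : β ∈ R.base)
    (h : 0 < R.coord γ β) : γ ∈ R.posRoots := by
  rcases R.pos_or_neg γ hγ with hp | hn
  · exact R.mem_posRoots.2 ⟨hγ, hp⟩
  · exact absurd (hn β hβ) h.not_ge

lemma neg_mem_posRoots {γ : V} (hγ : γ ∈ R.Δ) (h : γ ∉ R.posRoots) : -γ ∈ R.posRoots := by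
  rcases R.pos_or_neg γ hγ with hp | hn
  · exact absurd (R.mem_posRoots.2 ⟨hγ, hp⟩) h
  · exact R.mem_posRoots.2 ⟨R.neg_mem hγ, fun β hβ => by rw [R.coord_neg]; linarith [hn β hβ]⟩

lemma exists_coord_pos {γ : V} (hγ : γ ∈ R.posRoots) : ∃ β ∈ R.base, 0 < R.coord γ β := by
  obtain ⟨β, hβ, hne⟩ := R.exists_coord_ne_zero (R.posRoots_subset hγ)
  exact ⟨β, hβ, (R.coord_nonneg hγ hβ).lt_of_ne' hne⟩

lemma neg_notMem_posRoots {γ : V} (hγ : γ ∈ R.posRoots) : -γ ∉ R.posRoots := fun h => by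
  obtain ⟨β, hβ, hpos⟩ := R.exists_coord_pos hγ
  have := R.coord_nonneg h hβ
  rw [R.coord_neg] at this
  linarith

lemma ht_pos {γ : V} (hγ : γ ∈ R.posRoots) : 0 < R.ht γ := by
  obtain ⟨β, hβ, hpos⟩ := R.exists_coord_pos hγ
  exact hpos.trans_le (Finset.single_le_sum (fun δ hδ => R.coord_nonneg hγ hδ) hβ)

lemma sum_roots_eq_two_mul {f : V → ℝ} (hf : ∀ γ ∈ R.Δ, f (-γ) = f γ) :
    ∑ γ ∈ R.Δ, f γ = 2 * ∑ γ ∈ R.posRoots, f γ := by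
  rw [← Finset.sum_filter_add_sum_filter_not R.Δ (· ∈ R.posRoots), Finset.filter_mem_eq_inter,
    Finset.inter_eq_right.2 R.posRoots_subset, two_mul, add_right_inj]
  refine Finset.sum_nbij' (fun γ => -γ) (fun γ => -γ) ?_ ?_ (by simp) (by simp) ?_
  · intro γ hγ
    obtain ⟨hγΔ, hγ⟩ := Finset.mem_filter.1 hγ
    exact R.neg_mem_posRoots hγΔ hγ
  · intro γ hγ
    exact Finset.mem_filter.2 ⟨R.neg_mem (R.posRoots_subset hγ), R.neg_notMem_posRoots hγ⟩
  · intro γ hγ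
    exact (hf γ (Finset.mem_filter.1 hγ).1).symm

lemma base_mem_posRoots {β : V} (hβ : β ∈ R.base) : β ∈ R.posRoots :=
  R.mem_posRoots_of_coord_pos (R.base_sub hβ) hβ (by simp [R.coord_simple hβ hβ])

lemma eq_one_of_smul_mem {γ : V} (hγ : γ ∈ R.Δ) {n : ℤ} (hn : 0 < n) (h : (n : ℝ) • γ ∈ R.Δ) :
    n = 1 := by
  obtain ⟨k, hk⟩ := R.exists_pairing_eq_int hγ h
  have hγγ := (R.inner_self_pos hγ).ne'
  have hn' : (n : ℝ) ≠ 0 := by exact_mod_cast hn.ne'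
  have hnk : n * k = 2 := by
    have : (n : ℝ) * k = 2 := by
      rw [← hk, pairing, real_inner_smul_right, real_inner_smul_left, real_inner_smul_right]
      field_simp
    exact_mod_cast this
  have hn2 : n ≤ 2 := Int.le_of_dvd two_pos ⟨k, hnk.symm⟩
  interval_cases n
  · rfl
  · exact absurd (by exact_mod_cast h) (R.reduced γ hγ)

lemma eq_of_coord_eq_zero_of_ne {γ β : V} (hγ : γ ∈ R.posRoots) (hβ : β ∈ R.base)
    (hsupp : ∀ δ ∈ R.base, δ ≠ β → R.coord γ δ = 0) : γ = β := by
  have hγΔ := R.posRoots_subset hγ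
  have hdecomp : γ = R.coord γ β • β := by
    conv_lhs => rw [R.root_decomp γ hγΔ]
    exact Finset.sum_eq_single_of_mem β hβ fun δ hδ hne => by rw [hsupp δ hδ hne, zero_smul]
  obtain ⟨n, hn⟩ := R.coord_int γ hγΔ β hβ
  have hnpos : 0 < n := by
    have hne : R.coord γ β ≠ 0 := fun h => R.root_ne_zero γ hγΔ (by rw [hdecomp, h, zero_smul])
    exact_mod_cast hn ▸ (R.coord_nonneg hγ hβ).lt_of_ne' hne
  rw [hn] at hdecomp
  rw [hdecomp, R.eq_one_of_smul_mem (R.base_sub hβ) hnpos (hdecomp ▸ hγΔ), Int.cast_one, one_smul]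

lemma sref_mem_posRoots {β γ : V} (hβ : β ∈ R.base) (hγ : γ ∈ R.posRoots) (hne : γ ≠ β) :
    sref β γ ∈ R.posRoots := by
  obtain ⟨δ, hδ, hδβ, hpos⟩ : ∃ δ ∈ R.base, δ ≠ β ∧ 0 < R.coord γ δ := by
    by_contra! h
    exact hne (R.eq_of_coord_eq_zero_of_ne hγ hβ fun δ hδ hδβ =>
      (h δ hδ hδβ).antisymm (R.coord_nonneg hγ hδ))
  refine R.mem_posRoots_of_coord_pos (R.sref_mem (R.base_sub hβ) (R.posRoots_subset hγ)) hδ ?_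
  rwa [R.coord_sref, R.coord_simple hβ hδ, if_neg hδβ.symm, mul_zero, sub_zero]

lemma sref_mem_posRoots_erase {β γ : V} (hβ : β ∈ R.base) (hγ : γ ∈ R.posRoots.erase β) :
    sref β γ ∈ R.posRoots.erase β := by
  obtain ⟨hne, hγ⟩ := Finset.mem_erase.1 hγ
  refine Finset.mem_erase.2 ⟨fun h => ?_, R.sref_mem_posRoots hβ hγ hne⟩
  have hβ0 := R.root_ne_zero β (R.base_sub hβ)
  have : γ = -β := by rw [← sref_sref hβ0 γ, h, sref_self hβ0]
  exact R.neg_notMem_posRoots (R.base_mem_posRoots hβ) (this ▸ hγ)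

lemma sum_posRoots_erase_eq_zero {β : V} (hβ : β ∈ R.base) {f : V → ℝ}
    (hf : ∀ γ ∈ R.posRoots, f (sref β γ) = -f γ) : ∑ γ ∈ R.posRoots.erase β, f γ = 0 := by
  have hβ0 := R.root_ne_zero β (R.base_sub hβ)
  refine Finset.sum_involution (fun γ _ => sref β γ) (fun γ hγ => ?_) (fun γ hγ hfγ h => ?_)
    (fun γ hγ => R.sref_mem_posRoots_erase hβ hγ) (fun γ _ => sref_sref hβ0 γ)
  · rw [hf γ (Finset.mem_of_mem_erase hγ)]; ring
  · have := hf γ (Finset.mem_of_mem_erase hγ)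
    rw [h] at this
    exact hfγ (by linarith)

lemma sum_posRoots_pairing_left {β : V} (hβ : β ∈ R.base) :
    ∑ γ ∈ R.posRoots, pairing β γ = 2 := by
  have hβ0 := R.root_ne_zero β (R.base_sub hβ)
  rw [← Finset.add_sum_erase _ _ (R.base_mem_posRoots hβ), pairing_self hβ0,
    R.sum_posRoots_erase_eq_zero hβ fun γ _ => ?_, add_zero]
  rw [← pairing_sref_left_eq hβ0, sref_self hβ0, pairing_neg_left]

lemma sum_posRoots_pairing_right {β : V} (hβ : β ∈ R.base) :
    ∑ γ ∈ R.posRoots, pairing γ β = 2 := by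
  have hβ0 := R.root_ne_zero β (R.base_sub hβ)
  rw [← Finset.add_sum_erase _ _ (R.base_mem_posRoots hβ), pairing_self hβ0,
    R.sum_posRoots_erase_eq_zero hβ fun γ _ => pairing_sref_self hβ0 γ, add_zero]

lemma sum_posRoots_pairing {γ : V} (hγ : γ ∈ R.Δ) :
    ∑ δ ∈ R.posRoots, pairing γ δ = 2 * R.ht γ := by
  have hexp : ∀ δ, pairing γ δ = ∑ β ∈ R.base, R.coord γ β * pairing β δ := fun δ => by
    conv_lhs => rw [R.root_decomp γ hγ]
    simp only [pairing, sum_inner, real_inner_smul_left, Finset.sum_div, Finset.mul_sum]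
    exact Finset.sum_congr rfl fun _ _ => by ring
  simp only [hexp]
  rw [Finset.sum_comm, ht, Finset.mul_sum]
  exact Finset.sum_congr rfl fun β hβ => by
    rw [← Finset.mul_sum, R.sum_posRoots_pairing_left hβ, mul_comm]

lemma exists_base_inner_pos {γ : V} (hγ : γ ∈ R.posRoots) : ∃ β ∈ R.base, 0 < ⟪γ, β⟫ := by
  have hγΔ := R.posRoots_subset hγ
  by_contra! h
  have : ⟪γ, γ⟫ ≤ 0 := by
    nth_rewrite 1 [R.root_decomp γ hγΔ]
    rw [sum_inner]
    exact Finset.sum_nonpos fun β hβ => by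
      rw [real_inner_smul_left, real_inner_comm]
      exact mul_nonpos_of_nonneg_of_nonpos (R.coord_nonneg hγ hβ) (h β hβ)
  exact this.not_gt (R.inner_self_pos hγΔ)

lemma one_le_pairing {x γ : V} (hx : x ∈ R.Δ) (hγ : γ ∈ R.Δ) (h : 0 < ⟪x, γ⟫) :
    1 ≤ pairing x γ := by
  obtain ⟨k, hk⟩ := R.exists_pairing_eq_int hx hγ
  have : (0 : ℝ) < k := hk ▸ (pairing_pos_iff (R.root_ne_zero γ hγ)).2 h
  rw [hk]
  exact_mod_cast (show (0 : ℤ) < k by exact_mod_cast this)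

theorem posRoots_induction {P : V → Prop} (hbase : ∀ β ∈ R.base, P β)
    (hsref : ∀ β ∈ R.base, ∀ γ ∈ R.posRoots, P γ → P (sref β γ)) :
    ∀ γ ∈ R.posRoots, P γ := by
  suffices h : ∀ n : ℕ, ∀ γ ∈ R.posRoots, R.ht γ < n → P γ from
    fun γ hγ => h _ γ hγ (exists_nat_gt _).choose_spec
  intro n
  induction n with
  | zero => exact fun γ hγ hlt => absurd hlt (by simpa using (R.ht_pos hγ).le)
  | succ n ih =>
    intro γ hγ hlt
    by_cases hγb : γ ∈ R.base
    · exact hbase γ hγb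
    obtain ⟨β, hβ, hpos⟩ := R.exists_base_inner_pos hγ
    have hne : γ ≠ β := fun h => hγb (h ▸ hβ)
    have hδ := R.sref_mem_posRoots hβ hγ hne
    have hk := R.one_le_pairing (R.posRoots_subset hγ) (R.base_sub hβ) hpos
    have hδP := ih _ hδ (by rw [R.ht_sref hβ]; push_cast at hlt; linarith)
    simpa [sref_sref (R.root_ne_zero β (R.base_sub hβ))] using hsref β hβ _ hδ hδP

def IsHighestRoot (θ : V) : Prop :=
  θ ∈ R.Δ ∧ ∀ γ ∈ R.Δ, ∀ β ∈ R.base, R.coord γ β ≤ R.coord θ β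

namespace IsHighestRoot

variable {R} {θ : V}

lemma mem_posRoots (hθ : R.IsHighestRoot θ) : θ ∈ R.posRoots := by
  refine R.mem_posRoots.2 ⟨hθ.1, fun β hβ => ?_⟩
  have := hθ.2 _ (R.neg_mem hθ.1) β hβ
  rw [R.coord_neg] at this
  linarith

lemma inner_nonneg (hθ : R.IsHighestRoot θ) {γ : V} (hγ : γ ∈ R.posRoots) : 0 ≤ ⟪γ, θ⟫ := by
  by_contra! hneg
  have hγΔ := R.posRoots_subset hγ
  obtain ⟨β, hβ, hpos⟩ := R.exists_coord_pos hγ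
  have hp : pairing θ γ < 0 := by
    rw [pairing, real_inner_comm]
    exact div_neg_of_neg_of_pos (by linarith) (R.inner_self_pos hγΔ)
  have := hθ.2 _ (R.sref_mem hγΔ hθ.1) β hβ
  rw [R.coord_sref] at this
  nlinarith

lemma pairing_le_one (hθ : R.IsHighestRoot θ) {γ : V} (hγ : γ ∈ R.posRoots) (hne : γ ≠ θ) :
    pairing γ θ ≤ 1 := by
  have hγΔ := R.posRoots_subset hγ
  obtain ⟨k, hk⟩ := R.exists_pairing_eq_int hγΔ hθ.1
  rw [hk]
  by_contra! hk1
  have hk2 : (2 : ℝ) ≤ k := by exact_mod_cast (show (2 : ℤ) ≤ k by exact_mod_cast hk1)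
  apply hne
  rw [R.root_decomp γ hγΔ, R.root_decomp θ hθ.1]
  refine Finset.sum_congr rfl fun β hβ => ?_
  have h1 := hθ.2 _ (R.neg_mem (R.sref_mem hθ.1 hγΔ)) β hβ
  rw [R.coord_neg, R.coord_sref, hk] at h1
  have h2 := hθ.2 γ hγΔ β hβ
  have h3 := R.coord_nonneg hθ.mem_posRoots hβ
  rw [show R.coord γ β = R.coord θ β by nlinarith]

/-- For a positive root `γ ≠ θ`, `⟨γ, θ^∨⟩ ∈ {0, 1}`, which gives this identity. -/
lemma pairing_mul_pairing (hθ : R.IsHighestRoot θ) {γ : V} (hγ : γ ∈ R.posRoots) (hne : γ ≠ θ) :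
    pairing θ γ * pairing γ θ = pairing θ γ := by
  have hγΔ := R.posRoots_subset hγ
  have hθ0 := R.root_ne_zero θ hθ.1
  obtain ⟨k, hk⟩ := R.exists_pairing_eq_int hγΔ hθ.1
  have h0 : 0 ≤ k := by
    rw [← Int.cast_nonneg_iff (R := ℝ), ← hk, pairing]
    exact div_nonneg (by linarith [hθ.inner_nonneg hγ]) real_inner_self_nonneg
  have h1 : k ≤ 1 := by exact_mod_cast hk ▸ hθ.pairing_le_one hγ hne
  interval_cases k
  · have : ⟪θ, γ⟫ = 0 := by
      rw [real_inner_comm]; exact (pairing_eq_zero_iff hθ0).1 (by simpa using hk)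
    simp [pairing, this]
  · rw [hk]; push_cast; ring

end IsHighestRoot

noncomputable def casimir : V →ₗ[ℝ] V where
  toFun x := ∑ δ ∈ R.Δ, pairing x δ • δ
  map_add' x y := by simp only [pairing_add_left, add_smul, Finset.sum_add_distrib]
  map_smul' c x := by simp only [pairing_smul_left, Finset.smul_sum, smul_smul]; rfl

lemma casimir_apply (x : V) : R.casimir x = ∑ δ ∈ R.Δ, pairing x δ • δ := rfl

lemma inner_casimir_left (x y : V) : ⟪R.casimir x, y⟫ = ∑ δ ∈ R.Δ, pairing x δ * ⟪δ, y⟫ := by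
  simp only [casimir_apply, sum_inner, real_inner_smul_left]

lemma inner_casimir_comm (x y : V) : ⟪R.casimir x, y⟫ = ⟪x, R.casimir y⟫ := by
  rw [real_inner_comm (R.casimir y) x, inner_casimir_left, inner_casimir_left]
  refine Finset.sum_congr rfl fun δ _ => ?_
  simp only [pairing, real_inner_comm δ x, real_inner_comm δ y]
  ring

lemma inner_casimir_self (x : V) :
    ⟪R.casimir x, x⟫ = 2 * ∑ δ ∈ R.posRoots, pairing x δ * ⟪δ, x⟫ := by
  rw [inner_casimir_left, R.sum_roots_eq_two_mul fun δ _ => by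
    rw [pairing_neg_right, inner_neg_left, neg_mul_neg]]

lemma casimir_sref {γ : V} (hγ : γ ∈ R.Δ) (x : V) :
    R.casimir (sref γ x) = sref γ (R.casimir x) := by
  have hγ0 := R.root_ne_zero γ hγ
  rw [casimir_apply, casimir_apply, map_sum]
  simp only [map_smul, pairing_sref_left_eq hγ0]
  exact Finset.sum_nbij' (sref γ) (sref γ) (fun δ hδ => R.sref_mem hγ hδ)
    (fun δ hδ => R.sref_mem hγ hδ) (fun δ _ => sref_sref hγ0 δ) (fun δ _ => sref_sref hγ0 δ)
    (fun δ _ => by rw [sref_sref hγ0])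

lemma casimir_root {γ : V} (hγ : γ ∈ R.Δ) : ∃ c : ℝ, R.casimir γ = c • γ := by
  have hγ0 := R.root_ne_zero γ hγ
  have h : sref γ (R.casimir γ) = -R.casimir γ := by
    rw [← R.casimir_sref hγ, sref_self hγ0, map_neg]
  rw [sref_apply] at h
  exact ⟨pairing (R.casimir γ) γ / 2, by linear_combination (norm := module) (1 / 2 : ℝ) • h⟩

/-- `casimir` commutes with the reflections, so each root is an eigenvector; irreducibility
leaves a single eigenvalue. -/
lemma exists_casimir_eq_smul (hΔ : R.Δ.Nonempty) : ∃ c : ℝ, R.casimir = c • LinearMap.id := by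
  obtain ⟨γ₀, hγ₀⟩ := hΔ
  obtain ⟨c, hc⟩ := R.casimir_root hγ₀
  set S := R.Δ.filter fun γ => R.casimir γ = c • γ
  have hS : S = R.Δ := by
    refine R.irreducible S (Finset.filter_subset _ _) ⟨γ₀, Finset.mem_filter.2 ⟨hγ₀, hc⟩⟩ ?_
    intro γ hγ δ hδ hδS
    by_contra hγδ
    obtain ⟨c', hc'⟩ := R.casimir_root hδ
    have := R.inner_casimir_comm γ δ
    rw [(Finset.mem_filter.1 hγ).2, hc', real_inner_smul_left, real_inner_smul_right] at this
    exact hδS (Finset.mem_filter.2 ⟨hδ, by rw [hc', mul_right_cancel₀ hγδ this]⟩)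
  refine ⟨c, LinearMap.ext_on R.span_eq_top fun γ hγ => ?_⟩
  have : γ ∈ S := hS ▸ hγ
  exact (Finset.mem_filter.1 this).2

/-- The scalar is computed from `⟪casimir θ, θ⟫`. -/
lemma eq_two_mul_ht_add_one_of_casimir_eq_smul {θ : V} (hθ : R.IsHighestRoot θ) {c : ℝ}
    (hc : R.casimir = c • LinearMap.id) : c = 2 * (R.ht θ + 1) := by
  have hθpos := hθ.mem_posRoots
  have hθ0 := R.root_ne_zero θ hθ.1
  have hθθ := R.inner_self_pos hθ.1
  have hterm : ∀ δ ∈ R.posRoots.erase θ, pairing θ δ * ⟪δ, θ⟫ = pairing θ δ * (⟪θ, θ⟫ / 2) :=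
    fun δ hδ => by
      rw [inner_eq_pairing_mul hθ0, ← mul_assoc,
        hθ.pairing_mul_pairing (Finset.mem_of_mem_erase hδ) (Finset.ne_of_mem_erase hδ)]
  have hsum := R.sum_posRoots_pairing hθ.1
  rw [← Finset.add_sum_erase _ _ hθpos, pairing_self hθ0] at hsum
  have key := R.inner_casimir_self θ
  rw [hc, LinearMap.smul_apply, LinearMap.id_apply, real_inner_smul_left,
    ← Finset.add_sum_erase _ _ hθpos, Finset.sum_congr rfl hterm, ← Finset.sum_mul,
    pairing_self hθ0] at key
  have : (c - 2 * (R.ht θ + 1)) * ⟪θ, θ⟫ = 0 := by linear_combination key + ⟪θ, θ⟫ * hsum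
  exact sub_eq_zero.1 ((mul_eq_zero.1 this).resolve_right hθθ.ne')

lemma inner_fw {γ β : V} (hγ : γ ∈ R.Δ) (hβ : β ∈ R.base) :
    ⟪γ, R.fw β⟫ = R.coord γ β * (⟪β, β⟫ / 2) := by
  conv_lhs => rw [R.root_decomp γ hγ]
  rw [sum_inner, Finset.sum_eq_single_of_mem β hβ fun δ hδ hne => by
    rw [real_inner_smul_left, real_inner_comm, R.fw_spec β hβ δ hδ, if_neg hne, mul_zero]]
  rw [real_inner_smul_left, real_inner_comm, R.fw_spec β hβ β hβ, if_pos rfl]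

lemma pairing_fw_base {α β : V} (hα : α ∈ R.base) (hβ : β ∈ R.base) :
    pairing (R.fw α) β = if β = α then 1 else 0 := by
  have := R.inner_self_pos (R.base_sub hβ)
  rw [pairing, R.fw_spec α hα β hβ]
  split_ifs with h
  · subst h; field_simp
  · simp

lemma inner_fw_self_pos {α : V} (hα : α ∈ R.base) : 0 < ⟪R.fw α, R.fw α⟫ := by
  refine real_inner_self_pos.2 fun h => ?_
  have := R.pairing_fw_base hα hα
  simp [h, pairing] at this

lemma exists_pairing_eq_int_of_base {x : V} (hx : ∀ β ∈ R.base, ∃ k : ℤ, pairing x β = k) :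
    ∀ γ ∈ R.Δ, ∃ k : ℤ, pairing x γ = k := by
  have hpos : ∀ γ ∈ R.posRoots, ∃ k : ℤ, pairing x γ = k := by
    refine R.posRoots_induction hx fun β hβ γ hγ ⟨k, hk⟩ => ?_
    obtain ⟨l, hl⟩ := hx β hβ
    obtain ⟨m, hm⟩ := R.exists_pairing_eq_int (R.base_sub hβ) (R.posRoots_subset hγ)
    refine ⟨k - l * m, ?_⟩
    rw [← pairing_sref_left_eq (R.root_ne_zero β (R.base_sub hβ)), sref_apply, sub_eq_add_neg,
      pairing_add_left, pairing_neg_left, pairing_smul_left, hk, hl, hm]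
    push_cast; ring
  intro γ hγ
  by_cases h : γ ∈ R.posRoots
  · exact hpos γ h
  · obtain ⟨k, hk⟩ := hpos _ (R.neg_mem_posRoots hγ h)
    exact ⟨-k, by rw [← neg_neg γ, pairing_neg_right, hk, Int.cast_neg]⟩

lemma exists_pairing_fw_eq_nat {α γ : V} (hα : α ∈ R.base) (hγ : γ ∈ R.posRoots) :
    ∃ m : ℕ, pairing (R.fw α) γ = m := by
  have hγΔ := R.posRoots_subset hγ
  obtain ⟨k, hk⟩ := R.exists_pairing_eq_int_of_base (fun β hβ => ⟨if β = α then 1 else 0, by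
    rw [R.pairing_fw_base hα hβ]; split_ifs <;> simp⟩) γ hγΔ
  have h0 : (0 : ℝ) ≤ k := by
    rw [← hk, pairing, real_inner_comm, R.inner_fw hγΔ hα]
    have := R.coord_nonneg hγ hα
    have := R.inner_self_pos hγΔ
    have := R.inner_self_pos (R.base_sub hα)
    positivity
  exact ⟨k.toNat, by rw [hk]; exact_mod_cast (Int.toNat_of_nonneg (by exact_mod_cast h0)).symm⟩

lemma inner_fw_pos_iff {α γ : V} (hα : α ∈ R.base) (hγ : γ ∈ R.posRoots) :
    0 < ⟪γ, R.fw α⟫ ↔ R.coord γ α ≠ 0 := by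
  have := R.inner_self_pos (R.base_sub hα)
  rw [R.inner_fw (R.posRoots_subset hγ) hα]
  constructor
  · intro h h0; simp [h0] at h
  · intro h; exact mul_pos ((R.coord_nonneg hγ hα).lt_of_ne' h) (by positivity)

lemma posRoots_filter_coord_ne_zero_eq {α : V} (hα : α ∈ R.base) :
    R.posRoots.filter (fun γ => R.coord γ α ≠ 0) = R.Rset α := by
  ext γ
  simp only [Finset.mem_filter, Rset]
  constructor
  · rintro ⟨hγ, h⟩
    exact ⟨R.posRoots_subset hγ, (R.inner_fw_pos_iff hα hγ).2 h⟩
  · rintro ⟨hγ, h⟩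
    have hc : 0 < R.coord γ α := by
      rw [R.inner_fw hγ hα] at h
      exact pos_of_mul_pos_left h (by linarith [R.inner_self_pos (R.base_sub hα)])
    have hγ' := R.mem_posRoots_of_coord_pos hγ hα hc
    exact ⟨hγ', hc.ne'⟩

section UpperBound

variable {α : V} {q : ℝ}

lemma sum_posRoots_inner_fw (hα : α ∈ R.base) (hq : ∑ γ ∈ R.Rset α, γ = q • R.fw α) :
    ∑ γ ∈ R.posRoots, ⟪γ, R.fw α⟫ = q * ⟪R.fw α, R.fw α⟫ := by
  rw [← Finset.sum_filter_add_sum_filter_not _ (fun γ => R.coord γ α ≠ 0),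
    R.posRoots_filter_coord_ne_zero_eq hα, Finset.sum_eq_zero (s := Finset.filter _ _), add_zero,
    ← sum_inner, hq, real_inner_smul_left]
  intro γ hγ
  obtain ⟨hγ, h⟩ := Finset.mem_filter.1 hγ
  rw [R.inner_fw (R.posRoots_subset hγ) hα, not_not.1 h, zero_mul]

/-- Evaluate `⟪casimir ϖ, ϖ⟫` in two ways. -/
lemma ht_add_one_sub_mul_inner_fw_self (hα : α ∈ R.base) {θ : V} (hθ : R.IsHighestRoot θ)
    (hq : ∑ γ ∈ R.Rset α, γ = q • R.fw α) :
    (R.ht θ + 1 - q) * ⟪R.fw α, R.fw α⟫ =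
      ∑ δ ∈ R.posRoots, (pairing (R.fw α) δ - 1) * ⟪δ, R.fw α⟫ := by
  obtain ⟨c, hc⟩ := R.exists_casimir_eq_smul ⟨θ, hθ.1⟩
  have key := R.inner_casimir_self (R.fw α)
  rw [hc, LinearMap.smul_apply, LinearMap.id_apply, real_inner_smul_left,
    R.eq_two_mul_ht_add_one_of_casimir_eq_smul hθ hc] at key
  simp only [sub_mul, one_mul, Finset.sum_sub_distrib, R.sum_posRoots_inner_fw hα hq]
  linear_combination key / 2

lemma sub_one_mul_inner_fw_nonneg (hα : α ∈ R.base) {δ : V} (hδ : δ ∈ R.posRoots) :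
    0 ≤ (pairing (R.fw α) δ - 1) * ⟪δ, R.fw α⟫ := by
  obtain ⟨m, hm⟩ := R.exists_pairing_fw_eq_nat hα hδ
  have := R.inner_self_pos (R.posRoots_subset hδ)
  rw [real_inner_comm, inner_eq_pairing_mul (R.root_ne_zero δ (R.posRoots_subset hδ)), hm]
  rcases Nat.eq_zero_or_pos m with rfl | hm1
  · simp
  · have : (1 : ℝ) ≤ m := by exact_mod_cast hm1
    have : 0 ≤ (m : ℝ) - 1 := by linarith
    positivity

lemma sub_one_mul_inner_fw_eq_zero_iff (hα : α ∈ R.base) {δ : V} (hδ : δ ∈ R.posRoots) :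
    (pairing (R.fw α) δ - 1) * ⟪δ, R.fw α⟫ = 0 ↔ pairing (R.fw α) δ ≤ 1 := by
  obtain ⟨m, hm⟩ := R.exists_pairing_fw_eq_nat hα hδ
  rw [real_inner_comm, inner_eq_pairing_mul (R.root_ne_zero δ (R.posRoots_subset hδ)), hm]
  have hm1 : (m : ℝ) ≤ 1 ↔ m = 0 ∨ m = 1 := by norm_cast; omega
  simp [hm1, sub_eq_zero, R.root_ne_zero δ (R.posRoots_subset hδ), or_comm]

end UpperBound

section Connectedness

open Submodule

lemma linearIndepOn_base : LinearIndepOn ℝ id (R.base : Set V) := by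
  refine linearIndepOn_finset_iff.2 fun f hf β hβ => ?_
  have := congrArg (R.coord · β) hf
  simp only [id, R.coord_sum, R.coord_smul, R.coord_zero] at this
  rwa [Finset.sum_eq_single_of_mem β hβ fun δ hδ hne => by
    rw [R.coord_simple hδ hβ, if_neg hne, mul_zero], R.coord_simple hβ hβ, if_pos rfl,
    mul_one] at this

lemma inner_base_nonpos {β β' : V} (hβ : β ∈ R.base) (hβ' : β' ∈ R.base) (hne : β ≠ β') :
    ⟪β, β'⟫ ≤ 0 := by
  by_contra! h
  have hp : 0 < pairing β β' := (pairing_pos_iff (R.root_ne_zero β' (R.base_sub hβ'))).2 h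
  rcases R.pos_or_neg _ (R.sref_mem (R.base_sub hβ') (R.base_sub hβ)) with hpos | hneg
  · have := hpos β' hβ'
    rw [R.coord_sref, R.coord_simple hβ hβ', if_neg hne, R.coord_simple hβ' hβ', if_pos rfl] at this
    linarith
  · have := hneg β hβ
    rw [R.coord_sref, R.coord_simple hβ hβ, if_pos rfl, R.coord_simple hβ' hβ,
      if_neg hne.symm] at this
    linarith

lemma sref_mem_or_mem_of_isOrtho {U U' : Submodule ℝ V} (h : U ⟂ U') {β x : V}
    (hβ : β ∈ U ∨ β ∈ U') (hx : x ∈ U ∨ x ∈ U') : sref β x ∈ U ∨ sref β x ∈ U' := by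
  rcases hβ with hβ | hβ <;> rcases hx with hx | hx
  · exact .inl (U.sub_mem hx (U.smul_mem _ hβ))
  · exact .inr (by rw [sref_eq_self_of_inner_eq_zero (h.symm.inner_eq hx hβ)]; exact hx)
  · exact .inl (by rw [sref_eq_self_of_inner_eq_zero (h.inner_eq hx hβ)]; exact hx)
  · exact .inr (U'.sub_mem hx (U'.smul_mem _ hβ))

lemma mem_span_or_mem_span_of_isOrtho {S : Finset V}
    (hS : span ℝ (S : Set V) ⟂ span ℝ ((R.base \ S : Finset V) : Set V)) {γ : V} (hγ : γ ∈ R.Δ) :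
    γ ∈ span ℝ (S : Set V) ∨ γ ∈ span ℝ ((R.base \ S : Finset V) : Set V) := by
  have hbase : ∀ β ∈ R.base, β ∈ span ℝ (S : Set V) ∨
      β ∈ span ℝ ((R.base \ S : Finset V) : Set V) := fun β hβ => by
    by_cases h : β ∈ S
    · exact .inl (subset_span h)
    · exact .inr (subset_span (Finset.mem_sdiff.2 ⟨hβ, h⟩))
  have hpos := R.posRoots_induction hbase fun β hβ _ _ hγ =>
    sref_mem_or_mem_of_isOrtho hS (hbase β hβ) hγ
  by_cases h : γ ∈ R.posRoots
  · exact hpos γ h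
  · rw [← neg_neg γ]
    exact (hpos _ (R.neg_mem_posRoots hγ h)).imp (Submodule.neg_mem _) (Submodule.neg_mem _)

/-- The Dynkin diagram is connected. -/
lemma exists_inner_ne_zero_of_ssubset {S : Finset V} (hS : S ⊂ R.base) (hne : S.Nonempty) :
    ∃ β ∈ S, ∃ β' ∈ R.base \ S, ⟪β, β'⟫ ≠ 0 := by
  by_contra! horth
  have hUU' : span ℝ (S : Set V) ⟂ span ℝ ((R.base \ S : Finset V) : Set V) :=
    isOrtho_span.2 fun β hβ β' hβ' => horth β hβ β' hβ'
  obtain ⟨β₀, hβ₀⟩ := hne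
  have hT := R.irreducible (R.Δ.filter (· ∈ span ℝ (S : Set V))) (Finset.filter_subset _ _)
    ⟨β₀, Finset.mem_filter.2 ⟨R.base_sub (hS.subset hβ₀), subset_span hβ₀⟩⟩ fun γ hγ δ hδ hδT => by
      have hδ' := (R.mem_span_or_mem_span_of_isOrtho hUU' hδ).resolve_left
        fun h => hδT (Finset.mem_filter.2 ⟨hδ, h⟩)
      exact hUU'.inner_eq (Finset.mem_filter.1 hγ).2 hδ'
  obtain ⟨β', hβ', hβ'S⟩ := Finset.exists_of_ssubset hS
  have h1 : β' ∈ span ℝ (S : Set V) := (Finset.mem_filter.1 (hT.symm ▸ R.base_sub hβ')).2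
  have h2 : β' ∈ span ℝ ((R.base \ S : Finset V) : Set V) :=
    subset_span (Finset.mem_sdiff.2 ⟨hβ', hβ'S⟩)
  exact (R.inner_self_pos (R.base_sub hβ')).ne' (hUU'.inner_eq h1 h2)

end Connectedness

section LowerBound

open Submodule

variable {α : V}

lemma inner_nonpos_of_coord_eq_zero (hα : α ∈ R.base) {γ : V} (hγ : γ ∈ R.posRoots)
    (h0 : R.coord γ α = 0) : ⟪γ, α⟫ ≤ 0 := by
  rw [R.root_decomp γ (R.posRoots_subset hγ), sum_inner]
  refine Finset.sum_nonpos fun β hβ => ?_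
  rw [real_inner_smul_left]
  by_cases hβα : β = α
  · rw [hβα, h0, zero_mul]
  · exact mul_nonpos_of_nonneg_of_nonpos (R.coord_nonneg hγ hβ) (R.inner_base_nonpos hβ hα hβα)

lemma pairing_nonpos_of_coord_eq_zero (hα : α ∈ R.base) {γ : V} (hγ : γ ∈ R.posRoots)
    (h0 : R.coord γ α = 0) : pairing γ α ≤ 0 :=
  div_nonpos_of_nonpos_of_nonneg (by linarith [R.inner_nonpos_of_coord_eq_zero hα hγ h0])
    (R.inner_self_pos (R.base_sub hα)).le

noncomputable def leviAdjacent (α : V) : Finset V :=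
  R.posRoots.filter fun γ => R.coord γ α = 0 ∧ ⟪γ, α⟫ ≠ 0

lemma mem_span_leviAdjacent {γ : V} (hγ : γ ∈ R.Δ) (h0 : R.coord γ α = 0) (hne : ⟪γ, α⟫ ≠ 0) :
    γ ∈ span ℝ (R.leviAdjacent α : Set V) := by
  by_cases h : γ ∈ R.posRoots
  · exact subset_span (Finset.mem_filter.2 ⟨h, h0, hne⟩)
  · rw [← neg_neg γ]
    refine Submodule.neg_mem _ (subset_span (Finset.mem_filter.2 ⟨R.neg_mem_posRoots hγ h, ?_, ?_⟩))
    · rw [R.coord_neg, h0, neg_zero]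
    · rwa [inner_neg_left, neg_ne_zero]

/-- Grow the set along the (connected) Dynkin diagram: a new simple root `β'` is either a
neighbour of `α`, or `β' = (ζ - s_{β'} ζ) / ⟨ζ, β'^∨⟩` for some `ζ` already in the set. -/
lemma base_erase_subset_span_leviAdjacent (hα : α ∈ R.base) :
    ((R.base.erase α : Finset V) : Set V) ⊆ span ℝ (R.leviAdjacent α : Set V) := by
  set W := span ℝ (R.leviAdjacent α : Set V)
  set S := R.base.filter fun β => β = α ∨ β ∈ W
  suffices hS : S = R.base by
    intro β hβ
    obtain ⟨hβα, hβ⟩ := Finset.mem_erase.1 hβ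
    exact ((Finset.mem_filter.1 (hS ▸ hβ : β ∈ S)).2).resolve_left hβα
  by_contra hS
  obtain ⟨β, hβS, β', hβ', hne⟩ := R.exists_inner_ne_zero_of_ssubset
    (Finset.ssubset_iff_subset_ne.2 ⟨Finset.filter_subset _ _, hS⟩)
    ⟨α, Finset.mem_filter.2 ⟨hα, .inl rfl⟩⟩
  obtain ⟨hβ'b, hβ'S⟩ := Finset.mem_sdiff.1 hβ'
  have hβ'α : β' ≠ α := fun h => hβ'S (Finset.mem_filter.2 ⟨hβ'b, .inl h⟩)
  have hc : R.coord β' α = 0 := by rw [R.coord_simple hβ'b hα, if_neg hβ'α]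
  apply hβ'S
  refine Finset.mem_filter.2 ⟨hβ'b, .inr ?_⟩
  by_cases hα' : ⟪β', α⟫ = 0
  swap
  · exact R.mem_span_leviAdjacent (R.base_sub hβ'b) hc hα'
  have hβα : β ≠ α := by rintro rfl; exact hne (by rw [real_inner_comm]; exact hα')
  have hβW : β ∈ W := ((Finset.mem_filter.1 hβS).2).resolve_left hβα
  obtain ⟨ζ, hζ, hζβ'⟩ : ∃ ζ ∈ R.leviAdjacent α, ⟪ζ, β'⟫ ≠ 0 := by
    by_contra! h
    exact hne ((isOrtho_span.2 fun ζ hζ x hx => by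
      rw [Set.mem_singleton_iff.1 hx]; exact h ζ hζ).inner_eq hβW (mem_span_singleton_self β'))
  obtain ⟨hζpos, hζ0, hζα⟩ := Finset.mem_filter.1 hζ
  have hβ'0 := R.root_ne_zero β' (R.base_sub hβ'b)
  have hk : pairing ζ β' ≠ 0 := fun h => hζβ' ((pairing_eq_zero_iff hβ'0).1 h)
  have hsW : sref β' ζ ∈ W := by
    refine R.mem_span_leviAdjacent (R.sref_mem (R.base_sub hβ'b) (R.posRoots_subset hζpos)) ?_ ?_
    · rw [R.coord_sref, hζ0, hc, mul_zero, sub_zero]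
    · rwa [sref_apply, inner_sub_left, real_inner_smul_left, hα', mul_zero, sub_zero]
  have : β' = (pairing ζ β')⁻¹ • (ζ - sref β' ζ) := by
    rw [sref_apply, sub_sub_cancel, smul_smul, inv_mul_cancel₀ hk, one_smul]
  rw [this]
  exact W.smul_mem _ (W.sub_mem (subset_span hζ) hsW)

lemma pairing_le_neg_one_of_mem_leviAdjacent (hα : α ∈ R.base) {γ : V}
    (hγ : γ ∈ R.leviAdjacent α) : pairing γ α ≤ -1 := by
  obtain ⟨hγpos, h0, hne⟩ := Finset.mem_filter.1 hγ
  obtain ⟨k, hk⟩ := R.exists_pairing_eq_int (R.posRoots_subset hγpos) (R.base_sub hα)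
  have hle : k ≤ 0 := by exact_mod_cast hk ▸ R.pairing_nonpos_of_coord_eq_zero hα hγpos h0
  have hk0 : k ≠ 0 := by
    rintro rfl
    exact hne ((pairing_eq_zero_iff (R.root_ne_zero α (R.base_sub hα))).1 (by simpa using hk))
  rw [hk]
  exact_mod_cast (show k ≤ -1 by omega)

lemma card_base_le_card_leviAdjacent_add_one (hα : α ∈ R.base) :
    R.base.card ≤ (R.leviAdjacent α).card + 1 := by
  have hrank := Submodule.finrank_mono (span_le.2 (R.base_erase_subset_span_leviAdjacent hα))
  rw [finrank_span_finset_eq_card (R.linearIndepOn_base.mono (by simp)),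
    Finset.card_erase_of_mem hα] at hrank
  have := finrank_span_finset_le_card (R := ℝ) (R.leviAdjacent α)
  unfold Set.finrank at this
  omega

variable {q : ℝ}

lemma eq_two_sub_sum_pairing (hα : α ∈ R.base) (hq : ∑ γ ∈ R.Rset α, γ = q • R.fw α) :
    q = 2 - ∑ γ ∈ R.posRoots.filter (fun γ => R.coord γ α = 0), pairing γ α := by
  have hRset : ∑ γ ∈ R.Rset α, pairing γ α = q := by
    have : ∑ γ ∈ R.Rset α, pairing γ α = pairing (∑ γ ∈ R.Rset α, γ) α := by
      simp only [pairing, sum_inner, Finset.mul_sum, Finset.sum_div]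
    rw [this, hq, pairing_smul_left, R.pairing_fw_base hα hα, if_pos rfl, mul_one]
  have := R.sum_posRoots_pairing_right hα
  rw [← Finset.sum_filter_add_sum_filter_not _ (fun γ => R.coord γ α ≠ 0),
    R.posRoots_filter_coord_ne_zero_eq hα, hRset] at this
  simp only [not_not] at this
  linarith

lemma card_leviAdjacent_le (hα : α ∈ R.base) :
    ((R.leviAdjacent α).card : ℝ) ≤
      -∑ γ ∈ R.posRoots.filter (fun γ => R.coord γ α = 0), pairing γ α := by
  rw [← Finset.sum_neg_distrib, Finset.card_eq_sum_ones, Nat.cast_sum, Nat.cast_one]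
  calc ∑ _γ ∈ R.leviAdjacent α, (1 : ℝ)
      ≤ ∑ γ ∈ R.leviAdjacent α, -pairing γ α := Finset.sum_le_sum fun γ hγ => by
        linarith [R.pairing_le_neg_one_of_mem_leviAdjacent hα hγ]
    _ ≤ ∑ γ ∈ R.posRoots.filter (fun γ => R.coord γ α = 0), -pairing γ α := by
        refine Finset.sum_le_sum_of_subset_of_nonneg
          (fun γ hγ => by simp only [leviAdjacent, Finset.mem_filter] at hγ ⊢; tauto)
          fun γ hγ _ => ?_
        obtain ⟨hγpos, h0⟩ := Finset.mem_filter.1 hγ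
        linarith [R.pairing_nonpos_of_coord_eq_zero hα hγpos h0]

end LowerBound

end RootSystemData

/-- For every simple root `α` one has `q_α ≤ h` (the Coxeter number),
with equality iff `ϖ_α` is minuscule, and moreover `q_α ≥ rk Δ + 1`. -/
theorem q_le_coxeter_and_minuscule_iff
    {V : Type*} [NormedAddCommGroup V] [InnerProductSpace ℝ V]
    (R : RootSystemData V) (α : V) (hα : α ∈ R.base)
    (θ : V) (hθ : θ ∈ R.Δ)
    (hθmax : ∀ γ ∈ R.Δ, ∀ β ∈ R.base, R.coord γ β ≤ R.coord θ β)
    (q : ℕ) (hq : (∑ γ ∈ R.Rset α, γ) = (q : ℝ) • R.fw α) :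
    (q : ℝ) ≤ R.ht θ + 1 ∧
    ((q : ℝ) = R.ht θ + 1 ↔ ∀ γ ∈ R.posRoots, 2 * ⟪R.fw α, γ⟫ / ⟪γ, γ⟫ ≤ 1) ∧
    R.base.card + 1 ≤ q := by
  have hW := R.inner_fw_self_pos hα
  have key := R.ht_add_one_sub_mul_inner_fw_self hα ⟨hθ, hθmax⟩ hq
  have hterms := fun δ (hδ : δ ∈ R.posRoots) => R.sub_one_mul_inner_fw_nonneg hα hδ
  refine ⟨?_, ?_, ?_⟩
  · have := key ▸ Finset.sum_nonneg hterms
    exact sub_nonneg.1 (nonneg_of_mul_nonneg_left this hW)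
  · rw [eq_comm, ← sub_eq_zero, ← mul_left_inj' hW.ne', zero_mul, key,
      Finset.sum_eq_zero_iff_of_nonneg hterms]
    exact forall₂_congr fun δ hδ => R.sub_one_mul_inner_fw_eq_zero_iff hα hδ
  · have hq' := R.eq_two_sub_sum_pairing hα hq
    have hZ := R.card_leviAdjacent_le hα
    have hcard : (R.base.card : ℝ) ≤ (R.leviAdjacent α).card + 1 := by
      exact_mod_cast R.card_base_le_card_leviAdjacent_add_one hα
    exact_mod_cast (by linarith : (R.base.card : ℝ) + 1 ≤ q)
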